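/- Let 0 < τ ≤ 1, d ≥ 1, and let l ∈ ℝ^M be a τ-regular vector. Let π : [M] → [N] be a map with |π^{−1}(i)| ≤ d for every i ∈ [N], and suppose that for every i ∈ [N] there is at most one j ∈ π^{−1}(i) with |l^{(j)}|² ≥ ‖l‖₂²/d⁸. Then Σ_{i∈[N]} ( Σ_{j∈π^{−1}(i)} |l^{(j)}| )⁴ ≤ (τ² + 4τ/d) · ‖l‖₂⁴; in particular this is at most 2τ·‖l‖₂⁴. -/

import Mathlib

/-!
Split each fiber sum `x = b + t` into one coordinate `b` that may be large and the sum `t` of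
the remaining (at most `d - 1`) coordinates, each at most `‖l‖₂ / d⁴`. Writing
`x⁴ = b⁴ + (2bt + t²)(b² + x²)`, regularity gives `b⁴ ≤ τ²‖l‖₂² b²`, the cross term `2bt + t²`
is at most of order `τ‖l‖₂²/d²`, and Cauchy–Schwarz bounds `b² + x²` by `(d + 1)` times the
fiber's share of `‖l‖₂²`. Summing over the fibers gives the bound `(τ² + cτ)‖l‖₂⁴` with
`c = (d - 1)(d + 1)²/d⁴`, which is at most both `4/d` and `1`.
-/

open Finset

theorem add_pow_four_le {b t q L m k : ℝ} (hb : 0 ≤ b) (ht : 0 ≤ t) (hbL : b ≤ L)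
    (htL : t ≤ k * L) (htm : t ≤ k * m) (hbq : b ^ 2 ≤ q) (hq : (b + t) ^ 2 ≤ (k + 1) * q) :
    (b + t) ^ 4 ≤ (L ^ 2 + k * (k + 2) ^ 2 * L * m) * q := by
  have hL : 0 ≤ L := hb.trans hbL
  have hbt : b * t ≤ k * L * m :=
    calc b * t ≤ L * (k * m) := mul_le_mul hbL htm ht hL
      _ = k * L * m := by ring
  have htt : t * t ≤ k * L * (k * m) := mul_le_mul htL htm ht (ht.trans htL)
  have hcross : 2 * b * t + t ^ 2 ≤ k * (k + 2) * L * m := by linear_combination 2 * hbt + htt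
  calc (b + t) ^ 4 = b ^ 2 * b ^ 2 + (2 * b * t + t ^ 2) * (b ^ 2 + (b + t) ^ 2) := by ring
    _ ≤ L ^ 2 * q + k * (k + 2) * L * m * ((k + 2) * q) := by
      gcongr
      · exact hcross.trans' (by positivity)
      · linarith
    _ = (L ^ 2 + k * (k + 2) ^ 2 * L * m) * q := by ring

theorem sum_pow_four_le_of_forall_ne {ι : Type*} [DecidableEq ι] {F : Finset ι} {a : ι → ℝ}
    {j₀ : ι} {L m : ℝ} (hj₀ : j₀ ∈ F) (ha : ∀ j ∈ F, 0 ≤ a j) (haL : ∀ j ∈ F, a j ≤ L)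
    (ham : ∀ j ∈ F, j ≠ j₀ → a j ≤ m) :
    (∑ j ∈ F, a j) ^ 4 ≤ (L ^ 2 + (#F - 1 : ℝ) * (#F + 1) ^ 2 * L * m) * ∑ j ∈ F, a j ^ 2 := by
  have hk : (#(F.erase j₀) : ℝ) = #F - 1 := cast_card_erase_of_mem hj₀
  have hsum := add_sum_erase F a hj₀
  have hbq : a j₀ ^ 2 ≤ ∑ j ∈ F, a j ^ 2 :=
    single_le_sum (f := fun j => a j ^ 2) (fun j _ => sq_nonneg _) hj₀
  have hq : (a j₀ + ∑ j ∈ F.erase j₀, a j) ^ 2 ≤ (#(F.erase j₀) + 1) * ∑ j ∈ F, a j ^ 2 := by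
    rw [hsum, hk, sub_add_cancel]
    exact sq_sum_le_card_mul_sum_sq
  have htL : ∑ j ∈ F.erase j₀, a j ≤ #(F.erase j₀) * L := by
    rw [← nsmul_eq_mul]
    exact sum_le_card_nsmul _ _ _ fun j hj => haL j (mem_of_mem_erase hj)
  have htm : ∑ j ∈ F.erase j₀, a j ≤ #(F.erase j₀) * m := by
    rw [← nsmul_eq_mul]
    exact sum_le_card_nsmul _ _ _ fun j hj => ham j (mem_of_mem_erase hj) (ne_of_mem_erase hj)
  have ht : 0 ≤ ∑ j ∈ F.erase j₀, a j := sum_nonneg fun j hj => ha j (mem_of_mem_erase hj)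
  calc (∑ j ∈ F, a j) ^ 4 = (a j₀ + ∑ j ∈ F.erase j₀, a j) ^ 4 := by rw [hsum]
    _ ≤ _ := add_pow_four_le (ha j₀ hj₀) ht (haL j₀ hj₀) htL htm hbq hq
    _ = _ := by rw [hk]; ring

theorem sum_pow_four_le_of_card_le {ι : Type*} {F : Finset ι} {a : ι → ℝ} {d : ℕ} {L m : ℝ}
    (hF : #F ≤ d) (ha : ∀ j ∈ F, 0 ≤ a j) (haL : ∀ j ∈ F, a j ≤ L) (hm : 0 ≤ m)
    (huniq : ∀ j₁ ∈ F, ∀ j₂ ∈ F, m < a j₁ → m < a j₂ → j₁ = j₂) :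
    (∑ j ∈ F, a j) ^ 4 ≤ (L ^ 2 + (d - 1 : ℝ) * (d + 1) ^ 2 * L * m) * ∑ j ∈ F, a j ^ 2 := by
  classical
  rcases F.eq_empty_or_nonempty with rfl | ⟨j, hj⟩
  · simp
  obtain ⟨j₀, hj₀, hsmall⟩ : ∃ j₀ ∈ F, ∀ j ∈ F, j ≠ j₀ → a j ≤ m := by
    by_cases hlarge : ∃ j₀ ∈ F, m < a j₀
    · obtain ⟨j₀, hj₀, hlt₀⟩ := hlarge
      exact ⟨j₀, hj₀, fun j hj hne => not_lt.1 fun hlt => hne (huniq j hj j₀ hj₀ hlt hlt₀)⟩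
    · push Not at hlarge
      exact ⟨j, hj, fun j' hj' _ => hlarge j' hj'⟩
  have hL : 0 ≤ L := (ha j₀ hj₀).trans (haL j₀ hj₀)
  have hcard : (1 : ℝ) ≤ #F := by exact_mod_cast card_pos.2 ⟨j, hj⟩
  have hFd : (#F : ℝ) ≤ d := by exact_mod_cast hF
  refine (sum_pow_four_le_of_forall_ne hj₀ ha haL hsmall).trans ?_
  gcongr
  all_goals linarith

theorem sum_fiber_pow_four_le {ι κ : Type*} [Fintype ι] [Fintype κ] [DecidableEq κ]
    {π : ι → κ} {a : ι → ℝ} {d : ℕ} {L m : ℝ} (hfiber : ∀ i, #{j | π j = i} ≤ d)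
    (ha : ∀ j, 0 ≤ a j) (haL : ∀ j, a j ≤ L) (hm : 0 ≤ m)
    (huniq : ∀ j₁ j₂, π j₁ = π j₂ → m < a j₁ → m < a j₂ → j₁ = j₂) :
    ∑ i, (∑ j with π j = i, a j) ^ 4 ≤ (L ^ 2 + (d - 1 : ℝ) * (d + 1) ^ 2 * L * m) * ∑ j, a j ^ 2 :=
  calc _ ≤ ∑ i, (L ^ 2 + (d - 1 : ℝ) * (d + 1) ^ 2 * L * m) * ∑ j with π j = i, a j ^ 2 :=
        sum_le_sum fun i _ => sum_pow_four_le_of_card_le (hfiber i) (fun j _ => ha j)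
          (fun j _ => haL j) hm fun j₁ h₁ j₂ h₂ =>
            huniq j₁ j₂ ((mem_filter.1 h₁).2.trans (mem_filter.1 h₂).2.symm)
    _ = _ := by rw [← mul_sum, sum_fiberwise]

theorem sub_one_mul_add_one_sq_div_pow_four_le_four_div {d : ℝ} (hd : 1 ≤ d) :
    (d - 1) * (d + 1) ^ 2 / d ^ 4 ≤ 4 / d := by
  rw [div_le_div_iff₀ (by positivity) (by positivity)]
  nlinarith [pow_le_pow_right₀ hd (show 3 ≤ 4 by norm_num)]

theorem sub_one_mul_add_one_sq_div_pow_four_le_one {d : ℝ} (hd : 1 ≤ d) :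
    (d - 1) * (d + 1) ^ 2 / d ^ 4 ≤ 1 := by
  rw [div_le_one (by positivity)]
  nlinarith [mul_nonneg (sub_nonneg.2 hd) (sub_nonneg.2 hd)]

theorem stmt_13 (M N d : ℕ) (hd : 1 ≤ d) (τ : ℝ) (hτ0 : 0 < τ) (hτ1 : τ ≤ 1)
    (l : Fin M → ℝ)
    (hreg : ∀ j, |l j| ≤ τ * Real.sqrt (∑ r, (l r) ^ 2))
    (π : Fin M → Fin N)
    (hfiber : ∀ i : Fin N, (Finset.univ.filter fun j => π j = i).card ≤ d)
    (hbig : ∀ i : Fin N, ∀ j₁ j₂ : Fin M, π j₁ = i → π j₂ = i →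
      (∑ r, (l r) ^ 2) / (d : ℝ) ^ 8 ≤ (l j₁) ^ 2 →
      (∑ r, (l r) ^ 2) / (d : ℝ) ^ 8 ≤ (l j₂) ^ 2 → j₁ = j₂) :
    (∑ i : Fin N, (∑ j ∈ Finset.univ.filter fun j => π j = i, |l j|) ^ 4
        ≤ (τ ^ 2 + 4 * τ / d) * Real.sqrt (∑ r, (l r) ^ 2) ^ 4) ∧
      ∑ i : Fin N, (∑ j ∈ Finset.univ.filter fun j => π j = i, |l j|) ^ 4
        ≤ 2 * τ * Real.sqrt (∑ r, (l r) ^ 2) ^ 4 := by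
  set s := Real.sqrt (∑ r, l r ^ 2)
  have hsS : s ^ 2 = ∑ r, l r ^ 2 := Real.sq_sqrt (sum_nonneg fun _ _ => sq_nonneg _)
  have hd' : (1 : ℝ) ≤ d := by exact_mod_cast hd
  have hlarge : ∀ j, s / d ^ 4 < |l j| → (∑ r, l r ^ 2) / (d : ℝ) ^ 8 ≤ l j ^ 2 := fun j h => by
    rw [← sq_abs, ← hsS, show (d : ℝ) ^ 8 = (d ^ 4) ^ 2 by ring, ← div_pow]
    exact pow_le_pow_left₀ (by positivity) h.le 2
  have htotal := sum_fiber_pow_four_le hfiber (fun j => abs_nonneg (l j)) hreg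
    (m := s / d ^ 4) (by positivity) fun j₁ j₂ hπ hlt₁ hlt₂ =>
      hbig _ j₁ j₂ hπ rfl (hlarge j₁ hlt₁) (hlarge j₂ hlt₂)
  set c : ℝ := (d - 1) * (d + 1) ^ 2 / d ^ 4
  have hcoef : ((τ * s) ^ 2 + (d - 1 : ℝ) * (d + 1) ^ 2 * (τ * s) * (s / d ^ 4)) * s ^ 2
      = (τ ^ 2 + c * τ) * s ^ 4 := by
    simp only [c]; field_simp
  simp only [sq_abs, ← hsS, hcoef] at htotal
  have hc₄ := sub_one_mul_add_one_sq_div_pow_four_le_four_div hd'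
  have hc₁ := sub_one_mul_add_one_sq_div_pow_four_le_one hd'
  refine ⟨htotal.trans ?_, htotal.trans ?_⟩ <;> gcongr
  · calc c * τ ≤ 4 / d * τ := by gcongr
      _ = 4 * τ / d := by ring
  · nlinarith
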